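/- Equivalence of the two auxiliary maximal operators: let p(·) ∈ P(ℝ^n) and W ∈ A_{p(·)}. Then for all f ∈ L^1_loc(ℝ^n; F^d) and a.e. x, M''_{W,p(·)} f(x) ≲_d M'_{W,p(·)} f(x) ≲_d [W]_{A_{p(·)}} M''_{W,p(·)} f(x), where M'_{W,p(·)} f(x) = sup_{Q∋x} avg_Q |W^{p(·)}_Q W^{−1}(y) f(y)| dy and M''_{W,p(·)} f(x) = sup_{Q∋x} avg_Q |(\overline{W}^{p'(·)}_Q)^{−1} W^{−1}(y) f(y)| dy. The key matrix estimate is |(\overline{W}^{p'(·)}_Q)^{−1}(W^{p(·)}_Q)^{−1}|_op ≲ d uniformly over all cubes Q. -/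

import Mathlib

open MeasureTheory ENNReal

noncomputable section

abbrev Euc (n : ℕ) := EuclideanSpace ℝ (Fin n)

open scoped ComplexOrder

/-- The half-open cube with lower-left corner `a` and side length `ℓ`,
with sides parallel to the coordinate axes. -/
def cube {n : ℕ} (a : Euc n) (ℓ : ℝ) : Set (Euc n) :=
  WithLp.ofLp ⁻¹' Set.univ.pi fun i => Set.Ico (a i) (a i + ℓ)

/-- The modular of a variable Lebesgue space with (extended-real valued) exponent `p`:
the integral of `f ^ p` over the set where `p` is finite plus the essential supremum
of `f` over the set where `p = ∞`. -/
def modularE {n : ℕ} (p : Euc n → ℝ≥0∞) (f : Euc n → ℝ≥0∞) : ℝ≥0∞ :=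
  (∫⁻ x in {x | p x ≠ ∞}, f x ^ (p x).toReal) +
    essSup f (volume.restrict {x | p x = ∞})

/-- The Luxemburg norm of the variable Lebesgue space `L^{p(·)}(ℝⁿ)`. -/
def luxNormE {n : ℕ} (p : Euc n → ℝ≥0∞) (f : Euc n → ℝ≥0∞) : ℝ≥0∞ :=
  sInf {l : ℝ≥0∞ | l ≠ 0 ∧ modularE p (fun x => f x / l) ≤ 1}

/-- The Euclidean norm of a vector in `ℂ^d`. -/
def evNorm {d : ℕ} (u : Fin d → ℂ) : ℝ := ‖(WithLp.equiv 2 (Fin d → ℂ)).symm u‖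

/-- The operator norm of a `d × d` complex matrix, induced by the Euclidean norm. -/
def opNorm {d : ℕ} (V : Matrix (Fin d) (Fin d) ℂ) : ℝ :=
  ⨆ u : {u : Fin d → ℂ // evNorm u = 1}, evNorm (V.mulVec u)

/-- `1/p_Q`, the reciprocal of the harmonic mean of the exponent `p` over the cube `Q`. -/
def harmAvg {n : ℕ} (p : Euc n → ℝ≥0∞) (a : Euc n) (ℓ : ℝ) : ℝ :=
  average (volume.restrict (cube a ℓ)) fun x => ((p x)⁻¹).toReal

/-- The Goldberg auxiliary maximal operator `M'_{W,p(·)}`, defined relative to a family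
`Wred` of reducing operators (indexed by the corner and side length of a cube):
`M' f(x) = sup_{Q ∋ x} avg_Q |Wred_Q W(y)⁻¹ f(y)| dy`. -/
def Mprime {n d : ℕ} (W : Euc n → Matrix (Fin d) (Fin d) ℂ)
    (Wred : Euc n → ℝ → Matrix (Fin d) (Fin d) ℂ) (f : Euc n → Fin d → ℂ)
    (x : Euc n) : ℝ≥0∞ :=
  ⨆ (a : Euc n) (ℓ : ℝ) (_ : 0 < ℓ) (_ : x ∈ cube a ℓ),
    (ENNReal.ofReal (ℓ ^ n))⁻¹ *
      ∫⁻ y in cube a ℓ,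
        ENNReal.ofReal (evNorm ((Wred a ℓ).mulVec (((W y)⁻¹).mulVec (f y))))

/-- `IsReducingFamily p W Wred` says that for each cube `Q` (corner `a`, side `ℓ`),
`Wred a ℓ` is a positive-definite constant matrix satisfying
`|Q|^{-1/p_Q} ‖ |W(·)u| 1_Q ‖_{L^{p(·)}} ≤ |Wred_Q u| ≤ √d · |Q|^{-1/p_Q} ‖ |W(·)u| 1_Q ‖_{L^{p(·)}}`
for every `u`, i.e. `Wred a ℓ` is a reducing operator for `W` on `Q`. -/
def IsReducingFamily {n d : ℕ} (p : Euc n → ℝ≥0∞) (W : Euc n → Matrix (Fin d) (Fin d) ℂ)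
    (Wred : Euc n → ℝ → Matrix (Fin d) (Fin d) ℂ) : Prop :=
  ∀ (a : Euc n) (ℓ : ℝ), 0 < ℓ → (Wred a ℓ).PosDef ∧ ∀ u : Fin d → ℂ,
    (ENNReal.ofReal ((ℓ ^ n) ^ (-(harmAvg p a ℓ))) *
        luxNormE p (fun y => (cube a ℓ).indicator
          (fun y => ENNReal.ofReal (evNorm ((W y).mulVec u))) y) ≤
      ENNReal.ofReal (evNorm ((Wred a ℓ).mulVec u))) ∧
    ENNReal.ofReal (evNorm ((Wred a ℓ).mulVec u)) ≤
      ENNReal.ofReal (Real.sqrt d) *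
        (ENNReal.ofReal ((ℓ ^ n) ^ (-(harmAvg p a ℓ))) *
          luxNormE p (fun y => (cube a ℓ).indicator
            (fun y => ENNReal.ofReal (evNorm ((W y).mulVec u))) y))

/-- The modified auxiliary maximal operator
`M''_{W,p(·)} f(x) = sup_{Q ∋ x} avg_Q |(Wbar_Q)⁻¹ W(y)⁻¹ f(y)| dy`, where `Wbar` is the
family of dual reducing operators. -/
def Mdoubleprime {n d : ℕ} (W : Euc n → Matrix (Fin d) (Fin d) ℂ)
    (Wbar : Euc n → ℝ → Matrix (Fin d) (Fin d) ℂ) (f : Euc n → Fin d → ℂ)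
    (x : Euc n) : ℝ≥0∞ :=
  ⨆ (a : Euc n) (ℓ : ℝ) (_ : 0 < ℓ) (_ : x ∈ cube a ℓ),
    (ENNReal.ofReal (ℓ ^ n))⁻¹ *
      ∫⁻ y in cube a ℓ,
        ENNReal.ofReal (evNorm (((Wbar a ℓ)⁻¹).mulVec (((W y)⁻¹).mulVec (f y))))

/-! For `y ∈ Q`, `⟪u, v⟫ = ⟪W(y) u, W(y)⁻¹ v⟫`. Averaging over `Q` and applying the
variable-exponent Hölder inequality (constant `2`) gives `|⟪u, v⟫| ≤ 2 |W_Q u| |W̄_Q v|`,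
because the normalisations `|Q|^{-1/p_Q}` and `|Q|^{-1/q_Q}` multiply to `|Q|⁻¹`.
With `m = W̄_Q⁻¹ W_Q⁻¹ w`, `u = W_Q⁻¹ w` and `v = W̄_Q⁻¹ m` this reads `|m|² ≤ 2 |w| |m|`,
so `|W̄_Q⁻¹ W_Q⁻¹|_op ≤ 2`. Both maximal inequalities then hold cube by cube, from the
factorisations `W̄_Q⁻¹ = (W̄_Q⁻¹ W_Q⁻¹) W_Q` and `W_Q = (W_Q W̄_Q) W̄_Q⁻¹`. -/

lemma measurable_of_holderConjugate {α : Type*} [MeasurableSpace α] {p q : α → ℝ≥0∞}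
    (hpq : ∀ x, (p x).HolderConjugate (q x)) (hp : Measurable p) : Measurable q := by
  have hq : q = fun x => (1 - (p x)⁻¹)⁻¹ := funext fun x => by
    rw [ENNReal.HolderConjugate.one_sub_inv (p x) (q x), inv_inv]
  rw [hq]
  exact (measurable_const.sub hp.inv).inv

namespace ENNReal

lemma mul_le_rpow_add_rpow_of_holderConjugate {p q : ℝ≥0∞} [p.HolderConjugate q]
    {a b : ℝ≥0∞} (ha : p = ∞ → a ≤ 1) (hb : q = ∞ → b ≤ 1) :
    a * b ≤ (if p = ∞ then 0 else a ^ p.toReal) + (if q = ∞ then 0 else b ^ q.toReal) := by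
  by_cases hp : p = ∞
  · have hq : q = 1 := (HolderConjugate.eq_top_iff_eq_one p q).1 hp
    simpa [hp, hq] using mul_le_of_le_one_left' (ha hp)
  by_cases hq : q = ∞
  · have hp1 : p = 1 := (HolderConjugate.eq_top_iff_eq_one q p).1 hq
    simpa [hp1, hq] using mul_le_of_le_one_right' (hb hq)
  have hpq := HolderConjugate.toReal_of_ne_top hp hq (p := p) (q := q)
  simp only [hp, hq, if_false]
  refine (young_inequality a b hpq).trans (add_le_add ?_ ?_)
  · rw [ofReal_toReal hp]
    exact div_le_of_le_mul (le_mul_of_one_le_right' (HolderConjugate.one_le p q))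
  · rw [ofReal_toReal hq]
    exact div_le_of_le_mul (le_mul_of_one_le_right' (HolderConjugate.one_le q p))

end ENNReal

section VariableLebesgue

variable {n : ℕ} {p q : Euc n → ℝ≥0∞}

lemma ae_le_one_of_modularE_le_one (hp : Measurable p) {F : Euc n → ℝ≥0∞}
    (hF : modularE p F ≤ 1) : ∀ᵐ x, p x = ∞ → F x ≤ 1 := by
  have h := ENNReal.ae_le_essSup F (μ := volume.restrict {x | p x = ∞})
  have hS : MeasurableSet {x | p x = ∞} := hp (measurableSet_singleton ∞)
  rw [ae_restrict_iff' hS] at h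
  filter_upwards [h] with x hx hpx using (hx hpx).trans (le_add_self.trans hF)

lemma lintegral_mul_le_two_of_modularE_le_one (hpq : ∀ x, (p x).HolderConjugate (q x))
    (hp : Measurable p) {F G : Euc n → ℝ≥0∞} (hF : Measurable F)
    (hFp : modularE p F ≤ 1) (hGq : modularE q G ≤ 1) :
    ∫⁻ x, F x * G x ≤ 2 := by
  have hq := measurable_of_holderConjugate hpq hp
  have hSp : MeasurableSet {x | p x ≠ ∞} := (hp (measurableSet_singleton ∞)).compl
  have hSq : MeasurableSet {x | q x ≠ ∞} := (hq (measurableSet_singleton ∞)).compl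
  calc ∫⁻ x, F x * G x
      ≤ ∫⁻ x, ({x | p x ≠ ∞}.indicator (fun x => F x ^ (p x).toReal) x +
          {x | q x ≠ ∞}.indicator (fun x => G x ^ (q x).toReal) x) := by
        refine lintegral_mono_ae ?_
        filter_upwards [ae_le_one_of_modularE_le_one hp hFp,
          ae_le_one_of_modularE_le_one hq hGq] with x hFx hGx
        have := hpq x
        simpa only [Set.indicator_apply, Set.mem_ofPred_eq, ite_not] using
          ENNReal.mul_le_rpow_add_rpow_of_holderConjugate hFx hGx
    _ = (∫⁻ x in {x | p x ≠ ∞}, F x ^ (p x).toReal) +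
          ∫⁻ x in {x | q x ≠ ∞}, G x ^ (q x).toReal := by
        have hFpow : Measurable fun x => F x ^ (p x).toReal :=
          hF.pow (ENNReal.measurable_toReal.comp hp)
        rw [lintegral_add_left (hFpow.indicator hSp),
          lintegral_indicator hSp, lintegral_indicator hSq]
    _ ≤ 1 + 1 := add_le_add (le_self_add.trans hFp) (le_self_add.trans hGq)
    _ = 2 := one_add_one_eq_two

end VariableLebesgue

section Luxemburg

variable {n : ℕ} {p q : Euc n → ℝ≥0∞}

lemma modularE_mono {f g : Euc n → ℝ≥0∞} (h : f ≤ g) : modularE p f ≤ modularE p g :=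
  add_le_add (lintegral_mono fun x => ENNReal.rpow_le_rpow (h x) ENNReal.toReal_nonneg)
    (essSup_mono_ae (ae_of_all _ h))

lemma modularE_div_le_one_of_luxNormE_lt {f : Euc n → ℝ≥0∞} {A : ℝ≥0∞}
    (hA : luxNormE p f < A) : modularE p (fun x => f x / A) ≤ 1 := by
  obtain ⟨l, ⟨-, hl⟩, hlA⟩ := sInf_lt_iff.1 hA
  exact (modularE_mono fun x => ENNReal.div_le_div_left hlA.le (f x)).trans hl

lemma lintegral_mul_le_two_mul_luxNormE (hpq : ∀ x, (p x).HolderConjugate (q x))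
    (hp : Measurable p) {f g : Euc n → ℝ≥0∞} (hf : Measurable f)
    (hfN : luxNormE p f ≠ ∞) (hgN : luxNormE q g ≠ ∞) :
    ∫⁻ x, f x * g x ≤ 2 * (luxNormE p f * luxNormE q g) := by
  have key : ∀ A > luxNormE p f, ∀ B > luxNormE q g, (∫⁻ x, f x * g x) / 2 ≤ A * B := by
    intro A hA B hB
    have hA0 : A ≠ 0 := (pos_of_gt hA).ne'
    have hB0 : B ≠ 0 := (pos_of_gt hB).ne'
    rcases eq_or_ne A ∞ with rfl | hAt
    · simp [ENNReal.top_mul hB0]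
    rcases eq_or_ne B ∞ with rfl | hBt
    · simp [ENNReal.mul_top hA0]
    have hfg : ∀ x, f x * g x = A * B * (f x / A * (g x / B)) := fun x => by
      rw [mul_mul_mul_comm, ENNReal.mul_div_cancel hA0 hAt, ENNReal.mul_div_cancel hB0 hBt]
    refine ENNReal.div_le_of_le_mul ?_
    rw [lintegral_congr hfg, lintegral_const_mul' _ _ (ENNReal.mul_ne_top hAt hBt)]
    exact mul_le_mul_right (lintegral_mul_le_two_of_modularE_le_one hpq hp (hf.div_const A)
      (modularE_div_le_one_of_luxNormE_lt hA) (modularE_div_le_one_of_luxNormE_lt hB)) _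
  rw [← ENNReal.div_le_iff' two_ne_zero ENNReal.ofNat_ne_top]
  exact ENNReal.le_mul_of_forall_lt (Or.inr hgN) (Or.inl hfN) key

end Luxemburg

section Cube

variable {n : ℕ}

lemma measurableSet_cube (a : Euc n) (ℓ : ℝ) : MeasurableSet (cube a ℓ) :=
  (MeasurableSet.univ_pi fun _ => measurableSet_Ico).preimage
    (PiLp.volume_preserving_ofLp (Fin n)).measurable

lemma volume_cube (a : Euc n) {ℓ : ℝ} (hℓ : 0 < ℓ) :
    volume (cube a ℓ) = ENNReal.ofReal (ℓ ^ n) := by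
  rw [cube, (PiLp.volume_preserving_ofLp (Fin n)).measure_preimage
    (MeasurableSet.univ_pi fun _ => measurableSet_Ico).nullMeasurableSet, volume_pi_pi]
  simp [Real.volume_Ico, ← ENNReal.ofReal_pow hℓ.le]

lemma harmAvg_add_harmAvg {p q : Euc n → ℝ≥0∞} (hpq : ∀ x, (p x).HolderConjugate (q x))
    (hp : Measurable p) (a : Euc n) {ℓ : ℝ} (hℓ : 0 < ℓ) :
    harmAvg p a ℓ + harmAvg q a ℓ = 1 := by
  have hvol : volume (cube a ℓ) = ENNReal.ofReal (ℓ ^ n) := volume_cube a hℓ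
  have : IsFiniteMeasure (volume.restrict (cube a ℓ)) :=
    isFiniteMeasure_restrict.2 (by simp [hvol])
  have : NeZero (volume.restrict (cube a ℓ)) :=
    ⟨by simp [Measure.restrict_eq_zero, hvol, pow_pos hℓ]⟩
  have hint : ∀ r s : Euc n → ℝ≥0∞, (∀ x, (r x).HolderConjugate (s x)) → Measurable r →
      Integrable (fun x => ((r x)⁻¹).toReal) (volume.restrict (cube a ℓ)) := by
    intro r s hrs hr
    refine Integrable.of_bound (hr.inv.ennreal_toReal).aestronglyMeasurable 1
      (ae_of_all _ fun x => ?_)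
    rw [Real.norm_of_nonneg ENNReal.toReal_nonneg]
    exact ENNReal.toReal_le_of_le_ofReal zero_le_one
      (by simpa using ENNReal.inv_le_one.2 (hrs x).one_le)
  have hsum : ∀ x, ((p x)⁻¹).toReal + ((q x)⁻¹).toReal = 1 := fun x => by
    rw [← ENNReal.toReal_add, (hpq x).inv_add_inv_eq_one, ENNReal.toReal_one]
    all_goals simp [(hpq x).ne_zero, (hpq x).symm.ne_zero]
  rw [harmAvg, harmAvg, average_eq, average_eq, ← smul_add,
    ← integral_add (hint p q hpq hp) (hint q p (fun x => (hpq x).symm)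
      (measurable_of_holderConjugate hpq hp))]
  simp_rw [hsum]
  rw [← average_eq, average_const]

end Cube

section EuclideanNorm

open Matrix

variable {d : ℕ}

lemma evNorm_eq_norm_toLp (u : Fin d → ℂ) : evNorm u = ‖WithLp.toLp 2 u‖ := rfl

lemma evNorm_nonneg (u : Fin d → ℂ) : 0 ≤ evNorm u := norm_nonneg _

lemma continuous_evNorm : Continuous (evNorm : (Fin d → ℂ) → ℝ) :=
  continuous_norm.comp (PiLp.continuous_toLp 2 _)

lemma evNorm_smul (c : ℝ) (u : Fin d → ℂ) : evNorm (c • u) = |c| * evNorm u := by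
  rw [evNorm_eq_norm_toLp, evNorm_eq_norm_toLp, WithLp.toLp_smul, norm_smul, Real.norm_eq_abs]

lemma inner_toLp_mulVec_of_isHermitian {H : Matrix (Fin d) (Fin d) ℂ} (hH : H.IsHermitian)
    (x y : Fin d → ℂ) :
    inner ℂ (WithLp.toLp 2 (H *ᵥ x)) (WithLp.toLp 2 y) =
      inner ℂ (WithLp.toLp 2 x) (WithLp.toLp 2 (H *ᵥ y)) := by
  rw [EuclideanSpace.inner_toLp_toLp, EuclideanSpace.inner_toLp_toLp, star_mulVec, hH.eq,
    dotProduct_comm (H *ᵥ y), dotProduct_mulVec, dotProduct_comm]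

lemma norm_inner_le_evNorm_mulVec_mul_evNorm_inv_mulVec {W : Matrix (Fin d) (Fin d) ℂ}
    (hW : W.IsHermitian) (hW' : IsUnit W.det) (u v : Fin d → ℂ) :
    ‖inner ℂ (WithLp.toLp 2 u) (WithLp.toLp 2 v)‖ ≤ evNorm (W *ᵥ u) * evNorm (W⁻¹ *ᵥ v) := by
  have h : inner ℂ (WithLp.toLp 2 u) (WithLp.toLp 2 v) =
      inner ℂ (WithLp.toLp 2 (W *ᵥ u)) (WithLp.toLp 2 (W⁻¹ *ᵥ v)) := by
    rw [inner_toLp_mulVec_of_isHermitian hW, mulVec_mulVec, mul_nonsing_inv W hW', one_mulVec]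
  rw [h]
  exact norm_inner_le_norm _ _

end EuclideanNorm

section OperatorNorm

open Matrix
open scoped Matrix.Norms.L2Operator

variable {d : ℕ}

lemma opNorm_nonneg (V : Matrix (Fin d) (Fin d) ℂ) : 0 ≤ opNorm V :=
  Real.iSup_nonneg fun _ => evNorm_nonneg _

lemma opNorm_le_of_forall_evNorm_mulVec_le {V : Matrix (Fin d) (Fin d) ℂ} {K : ℝ} (hK : 0 ≤ K)
    (h : ∀ w, evNorm (V *ᵥ w) ≤ K * evNorm w) : opNorm V ≤ K :=
  Real.iSup_le (fun u => by simpa [u.2] using h u) hK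

lemma evNorm_mulVec_le_opNorm_mul (V : Matrix (Fin d) (Fin d) ℂ) (w : Fin d → ℂ) :
    evNorm (V *ᵥ w) ≤ opNorm V * evNorm w := by
  rcases eq_or_ne (evNorm w) 0 with hw | hw
  · have hw0 : w = 0 := by simpa [evNorm_eq_norm_toLp] using hw
    simp [hw0, evNorm_eq_norm_toLp]
  set c := evNorm w
  have hc : 0 < c := (evNorm_nonneg w).lt_of_ne' hw
  have hu : evNorm (c⁻¹ • w) = 1 := by
    rw [evNorm_smul, abs_inv, abs_of_pos hc, inv_mul_cancel₀ hw]
  have hbdd : BddAbove (Set.range fun u : {u : Fin d → ℂ // evNorm u = 1} => evNorm (V *ᵥ u)) :=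
    ⟨‖V‖, by
      rintro _ ⟨u, rfl⟩
      simpa [← evNorm_eq_norm_toLp, u.2] using l2_opNorm_mulVec V (WithLp.toLp 2 u.1)⟩
  calc evNorm (V *ᵥ w) = c * evNorm (V *ᵥ (c⁻¹ • w)) := by
        rw [mulVec_smul, evNorm_smul, abs_inv, abs_of_pos hc, mul_inv_cancel_left₀ hw]
    _ ≤ c * opNorm V := by
        gcongr
        exact le_ciSup hbdd (⟨c⁻¹ • w, hu⟩ : {u : Fin d → ℂ // evNorm u = 1})
    _ = opNorm V * c := mul_comm _ _

lemma evNorm_inv_mul_inv_mulVec_le {A B : Matrix (Fin d) (Fin d) ℂ} (hA : IsUnit A.det)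
    (hB : B.IsHermitian) (hB' : IsUnit B.det) {C : ℝ} (hC : 0 ≤ C)
    (h : ∀ u v, ‖inner ℂ (WithLp.toLp 2 u) (WithLp.toLp 2 v)‖ ≤
      C * (evNorm (A *ᵥ u) * evNorm (B *ᵥ v)))
    (w : Fin d → ℂ) : evNorm ((B⁻¹ * A⁻¹) *ᵥ w) ≤ C * evNorm w := by
  set m := (B⁻¹ * A⁻¹) *ᵥ w
  have hm : evNorm m ^ 2 ≤ C * evNorm w * evNorm m :=
    calc evNorm m ^ 2 = ‖inner ℂ (WithLp.toLp 2 m) (WithLp.toLp 2 m)‖ := by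
          simp [evNorm_eq_norm_toLp]
      _ = ‖inner ℂ (WithLp.toLp 2 (A⁻¹ *ᵥ w)) (WithLp.toLp 2 (B⁻¹ *ᵥ m))‖ := by
          rw [← inner_toLp_mulVec_of_isHermitian hB.inv, mulVec_mulVec]
      _ ≤ C * (evNorm (A *ᵥ A⁻¹ *ᵥ w) * evNorm (B *ᵥ B⁻¹ *ᵥ m)) := h _ _
      _ = C * evNorm w * evNorm m := by
          rw [mulVec_mulVec, mulVec_mulVec, mul_nonsing_inv _ hA, mul_nonsing_inv _ hB',
            one_mulVec, one_mulVec, mul_assoc]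
  by_contra! hlt
  have hpos : 0 < evNorm m := (mul_nonneg hC (evNorm_nonneg w)).trans_lt hlt
  nlinarith [mul_lt_mul_of_pos_right hlt hpos]

end OperatorNorm

section Measurability

open Matrix

lemma measurable_evNorm_mulVec {α : Type*} [MeasurableSpace α] {d : ℕ}
    {W : α → Matrix (Fin d) (Fin d) ℂ} (hW : ∀ i j, Measurable fun x => W x i j)
    (u : Fin d → ℂ) : Measurable fun x => evNorm (W x *ᵥ u) := by
  -- `Matrix` carries no measurable structure, so we go through the entry array `of.symm ∘ W`.
  have hW' : Measurable fun x => of.symm (W x) :=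
    measurable_pi_iff.2 fun i => measurable_pi_iff.2 (hW i)
  have hof : Continuous fun B : Fin d → Fin d → ℂ => of B := continuous_id
  exact (continuous_evNorm.comp (hof.matrix_mulVec continuous_const)).measurable.comp hW'

end Measurability

/-- `|Q|^{-1/p_Q} ‖|W(·)u| 1_Q‖_{L^{p(·)}}` for `Q = cube a ℓ`: the norm whose reducing
operators `IsReducingFamily` describes. -/
def cubeWeightedNorm {n d : ℕ} (p : Euc n → ℝ≥0∞) (W : Euc n → Matrix (Fin d) (Fin d) ℂ)
    (a : Euc n) (ℓ : ℝ) (u : Fin d → ℂ) : ℝ≥0∞ :=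
  ENNReal.ofReal ((ℓ ^ n) ^ (-(harmAvg p a ℓ))) *
    luxNormE p (fun y => (cube a ℓ).indicator
      (fun y => ENNReal.ofReal (evNorm ((W y).mulVec u))) y)

section CubeDuality

open Matrix

variable {n d : ℕ} {W : Euc n → Matrix (Fin d) (Fin d) ℂ}

lemma rpow_neg_mul_rpow_neg_mul_self {x s t : ℝ} (hx : 0 < x) (hst : s + t = 1) :
    x ^ (-s) * x ^ (-t) * x = 1 := by
  rw [← Real.rpow_add hx, ← neg_add, hst, Real.rpow_neg_one, inv_mul_cancel₀ hx.ne']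

lemma volume_mul_norm_inner_le_lintegral (hW : ∀ y, (W y).IsHermitian)
    (hW' : ∀ y, IsUnit (W y).det) (a : Euc n) {ℓ : ℝ} (hℓ : 0 < ℓ) (u v : Fin d → ℂ) :
    ENNReal.ofReal (ℓ ^ n) * ENNReal.ofReal ‖inner ℂ (WithLp.toLp 2 u) (WithLp.toLp 2 v)‖ ≤
      ∫⁻ y, (cube a ℓ).indicator (fun y => ENNReal.ofReal (evNorm (W y *ᵥ u))) y *
        (cube a ℓ).indicator (fun y => ENNReal.ofReal (evNorm ((W y)⁻¹ *ᵥ v))) y := by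
  calc ENNReal.ofReal (ℓ ^ n) * ENNReal.ofReal ‖inner ℂ (WithLp.toLp 2 u) (WithLp.toLp 2 v)‖
      = ∫⁻ _ in cube a ℓ, ENNReal.ofReal ‖inner ℂ (WithLp.toLp 2 u) (WithLp.toLp 2 v)‖ := by
        rw [setLIntegral_const, volume_cube a hℓ, mul_comm]
    _ ≤ ∫⁻ y in cube a ℓ,
          ENNReal.ofReal (evNorm (W y *ᵥ u)) * ENNReal.ofReal (evNorm ((W y)⁻¹ *ᵥ v)) :=
        lintegral_mono fun y => by
          rw [← ENNReal.ofReal_mul (evNorm_nonneg _)]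
          exact ENNReal.ofReal_le_ofReal
            (norm_inner_le_evNorm_mulVec_mul_evNorm_inv_mulVec (hW y) (hW' y) u v)
    _ = _ := by rw [← lintegral_indicator (measurableSet_cube a ℓ), Set.indicator_mul]

lemma norm_inner_le_two_mul_cubeWeightedNorm {p q : Euc n → ℝ≥0∞}
    (hpq : ∀ x, (p x).HolderConjugate (q x)) (hp : Measurable p)
    (hW : ∀ y, (W y).IsHermitian) (hW' : ∀ y, IsUnit (W y).det)
    (hWm : ∀ i j, Measurable fun y => W y i j) (a : Euc n) {ℓ : ℝ} (hℓ : 0 < ℓ)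
    {u v : Fin d → ℂ} (hu : cubeWeightedNorm p W a ℓ u ≠ ∞)
    (hv : cubeWeightedNorm q (fun y => (W y)⁻¹) a ℓ v ≠ ∞) :
    ENNReal.ofReal ‖inner ℂ (WithLp.toLp 2 u) (WithLp.toLp 2 v)‖ ≤
      2 * (cubeWeightedNorm p W a ℓ u * cubeWeightedNorm q (fun y => (W y)⁻¹) a ℓ v) := by
  set cp := ENNReal.ofReal ((ℓ ^ n) ^ (-(harmAvg p a ℓ)))
  set cq := ENNReal.ofReal ((ℓ ^ n) ^ (-(harmAvg q a ℓ)))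
  set f := fun y => (cube a ℓ).indicator (fun y => ENNReal.ofReal (evNorm (W y *ᵥ u))) y
  set g := fun y => (cube a ℓ).indicator (fun y => ENNReal.ofReal (evNorm ((W y)⁻¹ *ᵥ v))) y
  have hcp : cp ≠ 0 := by simp [cp, Real.rpow_pos_of_pos (pow_pos hℓ n)]
  have hcq : cq ≠ 0 := by simp [cq, Real.rpow_pos_of_pos (pow_pos hℓ n)]
  have hnorm : cp * cq * ENNReal.ofReal (ℓ ^ n) = 1 := by
    have hx := pow_pos hℓ n
    rw [← ENNReal.ofReal_mul (by positivity), ← ENNReal.ofReal_mul (by positivity),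
      rpow_neg_mul_rpow_neg_mul_self hx (harmAvg_add_harmAvg hpq hp a hℓ), ENNReal.ofReal_one]
  have hu' : cubeWeightedNorm p W a ℓ u = cp * luxNormE p f := rfl
  have hv' : cubeWeightedNorm q (fun y => (W y)⁻¹) a ℓ v = cq * luxNormE q g := rfl
  have hf : luxNormE p f ≠ ∞ := fun h => hu (by rw [hu', h, ENNReal.mul_top hcp])
  have hg : luxNormE q g ≠ ∞ := fun h => hv (by rw [hv', h, ENNReal.mul_top hcq])
  calc ENNReal.ofReal ‖inner ℂ (WithLp.toLp 2 u) (WithLp.toLp 2 v)‖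
      = cp * cq * (ENNReal.ofReal (ℓ ^ n) *
          ENNReal.ofReal ‖inner ℂ (WithLp.toLp 2 u) (WithLp.toLp 2 v)‖) := by
        rw [← mul_assoc, hnorm, one_mul]
    _ ≤ cp * cq * ∫⁻ y, f y * g y := by
        gcongr
        exact volume_mul_norm_inner_le_lintegral hW hW' a hℓ u v
    _ ≤ cp * cq * (2 * (luxNormE p f * luxNormE q g)) := by
        gcongr
        exact lintegral_mul_le_two_mul_luxNormE hpq hp
          ((measurable_evNorm_mulVec hWm u).ennreal_ofReal.indicator (measurableSet_cube a ℓ))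
          hf hg
    _ = 2 * (cubeWeightedNorm p W a ℓ u * cubeWeightedNorm q (fun y => (W y)⁻¹) a ℓ v) := by
        rw [hu', hv']
        ring

end CubeDuality

lemma Matrix.PosDef.isUnit_det {m K : Type*} [Fintype m] [DecidableEq m] [Field K]
    [PartialOrder K] [StarRing K] {A : Matrix m m K} (hA : A.PosDef) : IsUnit A.det :=
  (Matrix.isUnit_iff_isUnit_det A).1 hA.isUnit

section ReducingOperators

open Matrix

variable {n d : ℕ} {p q : Euc n → ℝ≥0∞} {W : Euc n → Matrix (Fin d) (Fin d) ℂ}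
  {Wred Wbar : Euc n → ℝ → Matrix (Fin d) (Fin d) ℂ}

lemma opNorm_inv_mul_inv_le_two (hpq : ∀ x, (p x).HolderConjugate (q x)) (hp : Measurable p)
    (hW : ∀ y, (W y).PosDef) (hWm : ∀ i j, Measurable fun y => W y i j)
    (hred : IsReducingFamily p W Wred) (hbar : IsReducingFamily q (fun y => (W y)⁻¹) Wbar)
    (a : Euc n) (ℓ : ℝ) (hℓ : 0 < ℓ) : opNorm ((Wbar a ℓ)⁻¹ * (Wred a ℓ)⁻¹) ≤ 2 := by
  obtain ⟨hrpd, hr⟩ := hred a ℓ hℓ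
  obtain ⟨hbpd, hb⟩ := hbar a ℓ hℓ
  refine opNorm_le_of_forall_evNorm_mulVec_le zero_le_two
    (evNorm_inv_mul_inv_mulVec_le hrpd.isUnit_det hbpd.isHermitian hbpd.isUnit_det zero_le_two
      fun u v => ?_)
  have hu : cubeWeightedNorm p W a ℓ u ≤ ENNReal.ofReal (evNorm (Wred a ℓ *ᵥ u)) := (hr u).1
  have hv : cubeWeightedNorm q (fun y => (W y)⁻¹) a ℓ v ≤
      ENNReal.ofReal (evNorm (Wbar a ℓ *ᵥ v)) := (hb v).1
  rw [← ENNReal.ofReal_le_ofReal_iff (mul_nonneg zero_le_two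
    (mul_nonneg (evNorm_nonneg _) (evNorm_nonneg _))),
    ENNReal.ofReal_mul zero_le_two, ENNReal.ofReal_mul (evNorm_nonneg _), ENNReal.ofReal_ofNat]
  calc _ ≤ 2 * (cubeWeightedNorm p W a ℓ u * cubeWeightedNorm q (fun y => (W y)⁻¹) a ℓ v) :=
        norm_inner_le_two_mul_cubeWeightedNorm hpq hp (fun y => (hW y).isHermitian)
          (fun y => (hW y).isUnit_det) hWm a hℓ (ne_top_of_le_ne_top ENNReal.ofReal_ne_top hu)
          (ne_top_of_le_ne_top ENNReal.ofReal_ne_top hv)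
    _ ≤ _ := by gcongr

end ReducingOperators

section MaximalOperators

open Matrix

variable {n d : ℕ}

lemma ofReal_evNorm_mulVec_le_of_eq_mul {A M B : Matrix (Fin d) (Fin d) ℂ} (hA : A = M * B)
    {c : ℝ} (hM : opNorm M ≤ c) (z : Fin d → ℂ) :
    ENNReal.ofReal (evNorm (A *ᵥ z)) ≤ ENNReal.ofReal c * ENNReal.ofReal (evNorm (B *ᵥ z)) := by
  rw [← ENNReal.ofReal_mul ((opNorm_nonneg M).trans hM), hA, ← mulVec_mulVec]
  exact ENNReal.ofReal_le_ofReal ((evNorm_mulVec_le_opNorm_mul M _).trans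
    (mul_le_mul_of_nonneg_right hM (evNorm_nonneg _)))

lemma iSup_cube_average_le_mul {F G : Euc n → ℝ → Euc n → ℝ≥0∞} {c : ℝ≥0∞} (hc : c ≠ ∞)
    (h : ∀ a ℓ, 0 < ℓ → ∀ y, F a ℓ y ≤ c * G a ℓ y) (x : Euc n) :
    (⨆ (a : Euc n) (ℓ : ℝ) (_ : 0 < ℓ) (_ : x ∈ cube a ℓ),
        (ENNReal.ofReal (ℓ ^ n))⁻¹ * ∫⁻ y in cube a ℓ, F a ℓ y) ≤
      c * ⨆ (a : Euc n) (ℓ : ℝ) (_ : 0 < ℓ) (_ : x ∈ cube a ℓ),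
        (ENNReal.ofReal (ℓ ^ n))⁻¹ * ∫⁻ y in cube a ℓ, G a ℓ y := by
  simp only [ENNReal.mul_iSup]
  refine iSup₂_mono fun a ℓ => iSup₂_mono fun hℓ _ => ?_
  calc (ENNReal.ofReal (ℓ ^ n))⁻¹ * ∫⁻ y in cube a ℓ, F a ℓ y
      ≤ (ENNReal.ofReal (ℓ ^ n))⁻¹ * ∫⁻ y in cube a ℓ, c * G a ℓ y := by
        gcongr with y
        exact h a ℓ hℓ y
    _ = c * ((ENNReal.ofReal (ℓ ^ n))⁻¹ * ∫⁻ y in cube a ℓ, G a ℓ y) := by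
        rw [lintegral_const_mul' _ _ hc, mul_left_comm]

end MaximalOperators

/-- Equivalence of the two auxiliary maximal operators: there is a
constant `C`, depending only on `d`, such that for every `p(·) ∈ P(ℝⁿ)` with conjugate
`q(·)` and every matrix weight `W ∈ A_{p(·)}` (with reducing operators `Wred`, dual
reducing operators `Wbar`, and `[W]^R_{A_{p(·)}} ≤ RW`), every
`f ∈ L¹_loc(ℝⁿ; ℂ^d)` and every `x`:
`M''_{W,p(·)} f(x) ≤ C · M'_{W,p(·)} f(x)` and
`M'_{W,p(·)} f(x) ≤ C · RW · M''_{W,p(·)} f(x)`; moreover the key matrix estimate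
`|(Wbar_Q)⁻¹ (Wred_Q)⁻¹|_op ≤ C` holds uniformly over all cubes `Q`. -/
theorem stmt18 (d : ℕ) :
    ∃ C : ℝ, 0 < C ∧
      ∀ (n : ℕ) (p q : Euc n → ℝ≥0∞), (∀ x, 1 ≤ p x) →
        (∀ x, (p x)⁻¹ + (q x)⁻¹ = 1) → Measurable p →
      ∀ W : Euc n → Matrix (Fin d) (Fin d) ℂ, (∀ x, (W x).PosDef) →
        (∀ i j, Measurable fun x => W x i j) →
      ∀ Wred Wbar : Euc n → ℝ → Matrix (Fin d) (Fin d) ℂ,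
        IsReducingFamily p W Wred →
        IsReducingFamily q (fun x => (W x)⁻¹) Wbar →
      ∀ RW : ℝ, (∀ (a : Euc n) (ℓ : ℝ), 0 < ℓ → opNorm (Wred a ℓ * Wbar a ℓ) ≤ RW) →
      (∀ (a : Euc n) (ℓ : ℝ), 0 < ℓ → opNorm ((Wbar a ℓ)⁻¹ * (Wred a ℓ)⁻¹) ≤ C) ∧
        ∀ f : Euc n → Fin d → ℂ, Measurable f →
          LocallyIntegrable (fun y => evNorm (f y)) volume →
          ∀ x : Euc n,
            Mdoubleprime W Wbar f x ≤ ENNReal.ofReal C * Mprime W Wred f x ∧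
              Mprime W Wred f x ≤
                ENNReal.ofReal C * ENNReal.ofReal RW * Mdoubleprime W Wbar f x := by
  refine ⟨2, two_pos, fun n p q _ hpq hp W hW hWm Wred Wbar hred hbar RW hRW => ?_⟩
  have hkey := opNorm_inv_mul_inv_le_two (fun x => ENNReal.holderConjugate_iff.2 (hpq x)) hp
    hW hWm hred hbar
  refine ⟨hkey, fun f _ _ x => ⟨?_, ?_⟩⟩
  · refine iSup_cube_average_le_mul ENNReal.ofReal_ne_top (fun a ℓ hℓ y => ?_) x
    refine ofReal_evNorm_mulVec_le_of_eq_mul ?_ (hkey a ℓ hℓ) _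
    rw [mul_assoc, Matrix.nonsing_inv_mul _ (hred a ℓ hℓ).1.isUnit_det, mul_one]
  · calc Mprime W Wred f x ≤ ENNReal.ofReal RW * Mdoubleprime W Wbar f x := by
          refine iSup_cube_average_le_mul ENNReal.ofReal_ne_top (fun a ℓ hℓ y => ?_) x
          refine ofReal_evNorm_mulVec_le_of_eq_mul ?_ (hRW a ℓ hℓ) _
          rw [mul_assoc, Matrix.mul_nonsing_inv _ (hbar a ℓ hℓ).1.isUnit_det, mul_one]
      _ ≤ ENNReal.ofReal 2 * ENNReal.ofReal RW * Mdoubleprime W Wbar f x := by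
          rw [mul_assoc]
          exact le_mul_of_one_le_left' (by norm_num)
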